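/- (Delsarte–Hoffman / ratio bound) Let B be a real symmetric matrix indexed by the vertices of a graph X such that B(u,v) = 0 whenever u ≠ v and u is not adjacent to v. Suppose B has constant row sum d and least eigenvalue τ < 0 with d > 0. Then every coclique (independent set) S of X satisfies |S| ≤ |V(X)| / (1 - d/τ). -/

import Mathlib

/-!
Since `τ` is the least eigenvalue of the symmetric matrix `B`, the form `B - τ I` is positive
semidefinite, so `τ ‖x‖² ≤ xᵀ B x` for every `x`. Test this on `x = n 1_S - s 1` (with `n = |V|`,
`s = |S|`), which is orthogonal to the all-ones eigenvector of eigenvalue `d`. On a coclique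
`1_Sᵀ B 1_S = 0`, so `xᵀ B x = -n s² d` while `‖x‖² = n s (n - s)`; the inequality
`τ n s (n - s) ≤ -n s² d` rearranges to the bound.
-/

open Finset Matrix

namespace Matrix

variable {n : Type*} [Fintype n]

theorem IsSymm.posSemidef_sub_smul_one [DecidableEq n] {B : Matrix n n ℝ} (hB : B.IsSymm)
    {τ : ℝ} (hτ : ∀ μ : ℝ, (∃ x : n → ℝ, x ≠ 0 ∧ B *ᵥ x = μ • x) → τ ≤ μ) :
    (B - τ • 1).PosSemidef := by
  have hC : (B - τ • 1 : Matrix n n ℝ).IsHermitian :=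
    isHermitian_iff_isSymm.mpr (hB.sub (isSymm_one.smul τ))
  refine hC.posSemidef_iff_eigenvalues_nonneg.mpr fun i => ?_
  have hv := hC.mulVec_eigenvectorBasis i
  rw [sub_mulVec, smul_mulVec, one_mulVec, sub_eq_iff_eq_add, ← add_smul] at hv
  simpa using hτ _ ⟨_, fun h => hC.eigenvectorBasis.toBasis.ne_zero i (by simpa using h), hv⟩

theorem IsSymm.mul_dotProduct_self_le {B : Matrix n n ℝ} (hB : B.IsSymm) {τ : ℝ}
    (hτ : ∀ μ : ℝ, (∃ x : n → ℝ, x ≠ 0 ∧ B *ᵥ x = μ • x) → τ ≤ μ) (x : n → ℝ) :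
    τ * (x ⬝ᵥ x) ≤ x ⬝ᵥ B *ᵥ x := by
  classical
  have := (hB.posSemidef_sub_smul_one hτ).dotProduct_mulVec_nonneg x
  simp only [star_trivial, sub_mulVec, smul_mulVec, one_mulVec, dotProduct_sub,
    dotProduct_smul, smul_eq_mul] at this
  linarith

theorem IsSymm.dotProduct_mulVec_comm {B : Matrix n n ℝ} (hB : B.IsSymm) (x y : n → ℝ) :
    x ⬝ᵥ B *ᵥ y = y ⬝ᵥ B *ᵥ x := by
  rw [dotProduct_mulVec, ← hB.eq, vecMul_transpose, hB.eq, dotProduct_comm]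

end Matrix

namespace Finset

variable {V : Type*} [Fintype V]

theorem dotProduct_indicator_one (S : Finset V) (x : V → ℝ) :
    x ⬝ᵥ (S : Set V).indicator 1 = ∑ v ∈ S, x v := by
  classical
  simp [dotProduct, Set.indicator_apply, sum_ite_mem]

theorem indicator_one_dotProduct (S : Finset V) (x : V → ℝ) :
    (S : Set V).indicator 1 ⬝ᵥ x = ∑ v ∈ S, x v := by
  rw [dotProduct_comm, dotProduct_indicator_one]

theorem indicator_one_dotProduct_self (S : Finset V) :
    (S : Set V).indicator 1 ⬝ᵥ (S : Set V).indicator (1 : V → ℝ) = #S := by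
  rw [dotProduct_indicator_one, sum_congr rfl fun v hv => Set.indicator_of_mem (mem_coe.2 hv) _]
  simp

theorem indicator_one_dotProduct_mulVec_indicator_one {B : Matrix V V ℝ} (S : Finset V)
    (hBS : ∀ u ∈ S, ∀ v ∈ S, B u v = 0) :
    (S : Set V).indicator 1 ⬝ᵥ B *ᵥ (S : Set V).indicator 1 = 0 := by
  rw [indicator_one_dotProduct]
  exact sum_eq_zero fun u hu => by
    rw [mulVec, dotProduct_indicator_one]; exact sum_eq_zero (hBS u hu)

noncomputable def centeredIndicator (S : Finset V) : V → ℝ :=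
  (Fintype.card V : ℝ) • (S : Set V).indicator 1 - (#S : ℝ) • 1

theorem centeredIndicator_dotProduct_self (S : Finset V) :
    S.centeredIndicator ⬝ᵥ S.centeredIndicator =
      Fintype.card V * #S * (Fintype.card V - #S) := by
  simp only [centeredIndicator, dotProduct_sub, sub_dotProduct, dotProduct_smul, smul_dotProduct]
  rw [indicator_one_dotProduct_self]
  simp only [indicator_one_dotProduct, dotProduct_indicator_one,
    one_dotProduct_one, Pi.one_apply, sum_const, nsmul_eq_mul, smul_eq_mul]
  ring

theorem centeredIndicator_dotProduct_mulVec {B : Matrix V V ℝ} (hB : B.IsSymm) {d : ℝ}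
    (hrow : ∀ u, ∑ v, B u v = d) (S : Finset V) (hBS : ∀ u ∈ S, ∀ v ∈ S, B u v = 0) :
    S.centeredIndicator ⬝ᵥ B *ᵥ S.centeredIndicator = -(Fintype.card V * #S ^ 2 * d) := by
  have hB1 : B *ᵥ 1 = d • 1 := funext fun u => by simp [mulVec, dotProduct_one, hrow]
  simp only [centeredIndicator, mulVec_sub, mulVec_smul, dotProduct_sub, sub_dotProduct,
    dotProduct_smul, smul_dotProduct, hB.dotProduct_mulVec_comm 1, hB1,
    indicator_one_dotProduct_mulVec_indicator_one S hBS, indicator_one_dotProduct,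
    one_dotProduct_one, Pi.one_apply, sum_const, nsmul_eq_mul, smul_eq_mul]
  ring

end Finset

theorem le_div_one_sub_div_of_mul_le {n s d τ : ℝ} (hs : 0 ≤ s) (hsn : s ≤ n) (hd : 0 < d)
    (hτ : τ < 0) (h : τ * (n * s * (n - s)) ≤ -(n * s ^ 2 * d)) : s ≤ n / (1 - d / τ) := by
  have hpos : 0 < 1 - d / τ := by linarith [div_neg_of_pos_of_neg hd hτ]
  rw [le_div_iff₀ hpos, mul_sub, mul_one, mul_div_assoc', sub_le_iff_le_add, ← sub_le_iff_le_add',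
    le_div_iff_of_neg hτ]
  rcases hs.eq_or_lt with rfl | hs
  · nlinarith
  · have hns : 0 < n * s := mul_pos (hs.trans_le hsn) hs
    nlinarith

theorem ratio_bound_general {V : Type*} [Fintype V] (X : SimpleGraph V) (B : Matrix V V ℝ)
    (hsymm : B.IsSymm) (hdiag : ∀ v, B v v = 0)
    (hsupp : ∀ u v, u ≠ v → ¬X.Adj u v → B u v = 0)
    (d τ : ℝ) (hd : 0 < d) (hτ : τ < 0)
    (hrow : ∀ u, ∑ v, B u v = d)
    (hτleast : ∀ μ : ℝ, (∃ x : V → ℝ, x ≠ 0 ∧ B.mulVec x = μ • x) → τ ≤ μ)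
    (S : Finset V) (hS : ∀ u ∈ S, ∀ v ∈ S, ¬X.Adj u v) :
    (S.card : ℝ) ≤ (Fintype.card V : ℝ) / (1 - d / τ) := by
  have hBS : ∀ u ∈ S, ∀ v ∈ S, B u v = 0 := fun u hu v hv => by
    by_cases huv : u = v
    · exact huv ▸ hdiag u
    · exact hsupp u v huv (hS u hu v hv)
  have hform := hsymm.mul_dotProduct_self_le hτleast S.centeredIndicator
  rw [S.centeredIndicator_dotProduct_self, centeredIndicator_dotProduct_mulVec hsymm hrow S hBS]
    at hform
  exact le_div_one_sub_div_of_mul_le (Nat.cast_nonneg _) (by exact_mod_cast S.card_le_univ) hd hτ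
    hform

/-- The Delsarte–Hoffman (ratio) bound: if `B` is a symmetric weighted adjacency matrix
of the graph `X` (zero diagonal, supported on adjacent pairs) with constant row sum
`d > 0` and least eigenvalue `τ < 0`, then any coclique `S` of `X` satisfies
`|S| ≤ |V| / (1 - d/τ)`. -/
theorem ratio_bound {V : Type*} [Fintype V] (X : SimpleGraph V) (B : Matrix V V ℝ)
    (hsymm : B.IsSymm) (hdiag : ∀ v, B v v = 0)
    (hsupp : ∀ u v, u ≠ v → ¬X.Adj u v → B u v = 0)
    (d τ : ℝ) (hd : 0 < d) (hτ : τ < 0)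
    (hrow : ∀ u, ∑ v, B u v = d)
    (hτeig : ∃ x : V → ℝ, x ≠ 0 ∧ B.mulVec x = τ • x)
    (hτleast : ∀ μ : ℝ, (∃ x : V → ℝ, x ≠ 0 ∧ B.mulVec x = μ • x) → τ ≤ μ)
    (S : Finset V) (hS : ∀ u ∈ S, ∀ v ∈ S, ¬X.Adj u v) :
    (S.card : ℝ) ≤ (Fintype.card V : ℝ) / (1 - d / τ) :=
  ratio_bound_general X B hsymm hdiag hsupp d τ hd hτ hrow hτleast S hS
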